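/- arXiv:1804.07662 — 2 statements merged into one kernel-verified Lean document; each statement's English description precedes it below -/
import Mathlib

section
/- The set A₀ = {β > 1 : the sequence of zero-run lengths (l_n(β))_{n≥1} in the β-expansion of 1 is bounded} has Lebesgue measure zero. -/
open Filter MeasureTheory Set

/-- The β-transformation T_β(x) = βx − ⌊βx⌋. -/
noncomputable def betaT (β : ℝ) : ℝ → ℝ := fun x => β * x - ⌊β * x⌋

/-- The (i+1)-th digit of the β-expansion of x (0-indexed). -/
noncomputable def betaDigit (β x : ℝ) (i : ℕ) : ℤ := ⌊β * (betaT β)^[i] x⌋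

/-- A finite word is β-admissible if some x ∈ [0,1) has β-expansion beginning with it. -/
def IsAdmissibleWord (β : ℝ) (w : List ℤ) : Prop :=
  ∃ x ∈ Set.Ico (0:ℝ) 1, ∀ i (h : i < w.length), w.get ⟨i, h⟩ = betaDigit β x i

/-- An infinite sequence is β-admissible if it is the digit sequence of some x ∈ [0,1). -/
def IsAdmissibleSeq (β : ℝ) (e : ℕ → ℤ) : Prop :=
  ∃ x ∈ Set.Ico (0:ℝ) 1, ∀ i, e i = betaDigit β x i

/-- The basic interval (cylinder) of a word. -/
def cylinder (β : ℝ) (w : List ℤ) : Set ℝ :=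
  {x | x ∈ Set.Ico (0:ℝ) 1 ∧ ∀ i (h : i < w.length), betaDigit β x i = w.get ⟨i, h⟩}

/-- A basic interval is full if its length is β^{-n}. -/
def IsFull (β : ℝ) (w : List ℤ) : Prop :=
  volume (cylinder β w) = ENNReal.ofReal (1 / β ^ w.length)

-- The infinite β-expansion of 1: the periodic modification if the expansion of 1
-- terminates, and the expansion of 1 itself otherwise (0-indexed).
open Classical in
noncomputable def betaStar (β : ℝ) : ℕ → ℤ :=
  if h : ∃ n, betaDigit β 1 n ≠ 0 ∧ ∀ i, n < i → betaDigit β 1 i = 0 then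
    fun i =>
      if i % (h.choose + 1) = h.choose then betaDigit β 1 h.choose - 1
      else betaDigit β 1 (i % (h.choose + 1))
  else betaDigit β 1

/-- Strict lexicographic order on integer sequences. -/
def lexLt (a b : ℕ → ℤ) : Prop := ∃ n, (∀ i, i < n → a i = b i) ∧ a n < b n

/-- l_n(β): the length of the longest run of zeros following the n-th digit
(1-indexed position n) in the infinite β-expansion of 1. -/
noncomputable def zeroRunLen (β : ℝ) (n : ℕ) : ℕ∞ :=
  ⨆ k ∈ {k : ℕ | ∀ j, j < k → betaStar β (n + j) = 0}, (k : ℕ∞)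

/-- A₀: the set of bases β > 1 with bounded zero-runs in the expansion of 1. -/
def A0 : Set ℝ := {β | 1 < β ∧ ∃ C : ℕ, ∀ n, 1 ≤ n → zeroRunLen β n ≤ (C : ℕ∞)}

/-- The waiting time W_n^β(x,y): first k ≥ 1 with T_β^k x in the n-th basic interval of y. -/
noncomputable def waitingTime (β x y : ℝ) (n : ℕ) : ℕ∞ :=
  sInf {k : ℕ∞ | ∃ m : ℕ, k = (m : ℕ∞) ∧ 1 ≤ m ∧
    ∀ i, i < n → betaDigit β ((betaT β)^[m] x) i = betaDigit β y i}

/-- (log W_n^β(x,y)) / n as an extended real, with value ⊤ when W_n = ∞. -/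
noncomputable def waitingRatio (β x y : ℝ) (n : ℕ) : EReal :=
  if h : waitingTime β x y n = ⊤ then ⊤
  else (((Real.log ((waitingTime β x y n).untop h : ℕ)) / n : ℝ) : EReal)

namespace A0Proof

noncomputable def orb (β : ℝ) (k : ℕ) : ℝ := (betaT β)^[k] 1

noncomputable def dig (β : ℝ) (k : ℕ) : ℤ := betaDigit β 1 k

lemma orb_zero (β : ℝ) : orb β 0 = 1 := rfl

lemma dig_eq (β : ℝ) (k : ℕ) : dig β k = ⌊β * orb β k⌋ := rfl

lemma orb_succ (β : ℝ) (k : ℕ) : orb β (k+1) = β * orb β k - dig β k := by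
  simp only [orb, Function.iterate_succ_apply', betaT, dig, betaDigit]

lemma orb_fract (β : ℝ) (k : ℕ) : orb β (k+1) = Int.fract (β * orb β k) := by
  rw [orb_succ, Int.fract, dig_eq]

lemma orb_nonneg (β : ℝ) {k : ℕ} (hk : 1 ≤ k) : 0 ≤ orb β k := by
  obtain ⟨j, rfl⟩ := Nat.exists_eq_add_of_le hk
  rw [Nat.add_comm, orb_fract]; exact Int.fract_nonneg _

lemma orb_lt_one (β : ℝ) {k : ℕ} (hk : 1 ≤ k) : orb β k < 1 := by
  obtain ⟨j, rfl⟩ := Nat.exists_eq_add_of_le hk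
  rw [Nat.add_comm, orb_fract]; exact Int.fract_lt_one _

lemma orb_le_one (β : ℝ) (k : ℕ) : orb β k ≤ 1 := by
  cases k with
  | zero => exact le_of_eq (orb_zero β)
  | succ j => exact le_of_lt (orb_lt_one β (Nat.succ_le_succ (Nat.zero_le j)))

lemma orb_propagate {β : ℝ} {k : ℕ} (h : orb β k = 0) : ∀ j, k ≤ j → orb β j = 0 := by
  intro j hj
  induction j, hj using Nat.le_induction with
  | base => exact h
  | succ j hj ih => rw [orb_fract, ih, mul_zero, Int.fract_zero]

lemma dig_zero_of_orb {β : ℝ} {k : ℕ} (h : orb β k = 0) {j : ℕ} (hj : k ≤ j) :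
    dig β j = 0 := by
  rw [dig_eq, orb_propagate h j hj, mul_zero, Int.floor_zero]

lemma dig_zero_pos {β : ℝ} (hβ : 1 < β) : 1 ≤ dig β 0 := by
  rw [dig_eq, orb_zero, mul_one]
  exact Int.le_floor.mpr (by exact_mod_cast hβ.le)

section NonTerm
variable {β : ℝ} (hβ : 1 < β)
  (h : ¬∃ n, betaDigit β 1 n ≠ 0 ∧ ∀ i, n < i → betaDigit β 1 i = 0)

include hβ h in
lemma exists_dig_ne : ∀ m, ∃ i, m ≤ i ∧ dig β i ≠ 0 := by
  push_neg at h
  intro m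
  induction m with
  | zero =>
    refine ⟨0, le_rfl, ?_⟩
    have := dig_zero_pos hβ; omega
  | succ m ih =>
    obtain ⟨i, hi, hne⟩ := ih
    obtain ⟨i', hi', hne'⟩ := h i hne
    exact ⟨i', by omega, hne'⟩

include hβ h in
lemma orb_pos_nonterm : ∀ k, 0 < orb β k := by
  intro k
  rcases Nat.eq_zero_or_pos k with rfl | hk
  · rw [orb_zero]; exact one_pos
  rcases lt_or_eq_of_le (orb_nonneg β hk) with hpos | heq
  · exact hpos
  · exfalso
    obtain ⟨i, hi, hne⟩ := exists_dig_ne hβ h k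
    exact hne (dig_zero_of_orb heq.symm hi)

end NonTerm

section Term
variable {β : ℝ} (hβ : 1 < β) {m : ℕ}
  (hm2 : ∀ i, m < i → dig β i = 0)

include hβ hm2 in
lemma orb_term_zero : orb β (m+1) = 0 := by
  have hgeo : ∀ j, orb β (m+1+j) = β ^ j * orb β (m+1) := by
    intro j
    induction j with
    | zero => simp
    | succ j ih =>
      have : m < m+1+j := by omega
      rw [show m+1+(j+1) = (m+1+j)+1 by omega, orb_succ, hm2 _ this, ih]
      push_cast
      ring
  rcases lt_or_eq_of_le (orb_nonneg β (show 1 ≤ m+1 by omega)) with hpos | heq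
  · exfalso
    obtain ⟨j, hj⟩ := pow_unbounded_of_one_lt (1 / orb β (m+1)) hβ
    have h2 : 1 < β ^ j * orb β (m+1) := by
      rw [div_lt_iff₀ hpos] at hj
      linarith [hj]
    have h3 := orb_lt_one β (show 1 ≤ m+1+j by omega)
    rw [hgeo j] at h3
    linarith
  · exact heq.symm

omit hβ hm2 in
lemma orb_pos_le_term (hm1 : dig β m ≠ 0) : ∀ r, r ≤ m → 0 < orb β r := by
  intro r hr
  rcases Nat.eq_zero_or_pos r with rfl | hrp
  · rw [orb_zero]; exact one_pos
  rcases lt_or_eq_of_le (orb_nonneg β hrp) with hpos | heq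
  · exact hpos
  · exact absurd (dig_zero_of_orb heq.symm hr) hm1

end Term

lemma goodState {β : ℝ} (hβ : 1 < β) :
    ∃ u : ℕ → ℝ, u 0 = 1 ∧ (∀ k, u (k+1) = β * u k - betaStar β k) ∧
      (∀ k, 0 < u k) ∧ (∀ k, u k ≤ 1) := by
  by_cases h : ∃ n, betaDigit β 1 n ≠ 0 ∧ ∀ i, n < i → betaDigit β 1 i = 0
  · have hm1 : dig β h.choose ≠ 0 := h.choose_spec.1
    have hm2 : ∀ i, h.choose < i → dig β i = 0 := h.choose_spec.2
    have hstar : ∀ i, betaStar β i =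
        if i % (h.choose+1) = h.choose then dig β h.choose - 1
        else dig β (i % (h.choose+1)) := by
      intro i; rw [betaStar, dif_pos h]; rfl
    obtain ⟨m, hmeq⟩ : ∃ m, m = h.choose := ⟨_, rfl⟩
    rw [← hmeq] at hm1 hm2 hstar
    refine ⟨fun k => orb β (k % (m+1)), ?_, ?_, ?_, ?_⟩
    · simp [orb_zero]
    · intro k
      have hr : k % (m+1) < m+1 := Nat.mod_lt _ (Nat.succ_pos m)
      have h4 := Nat.div_add_mod k (m+1)
      by_cases hc : k % (m+1) = m
      · have hdvd : (m+1) ∣ (k+1) := by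
          refine ⟨k / (m+1) + 1, ?_⟩
          rw [hc] at h4
          nth_rewrite 1 [← h4]
          rw [Nat.mul_add, Nat.mul_one, Nat.add_assoc]
        have hmod0 : (k+1) % (m+1) = 0 := by
          obtain ⟨c, hc2⟩ := hdvd
          rw [hc2, Nat.mul_mod_right]
        show orb β ((k+1) % (m+1)) = β * orb β (k % (m+1)) - (betaStar β k : ℤ)
        rw [hstar k, if_pos hc, hmod0, hc, orb_zero]
        have hz := orb_term_zero hβ hm2
        have hs := orb_succ β m
        push_cast
        rw [hz] at hs
        linarith
      · have hmod1 : (k+1) % (m+1) = k % (m+1) + 1 := by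
          nth_rewrite 1 [← h4]
          rw [Nat.add_assoc, Nat.mul_add_mod]
          exact Nat.mod_eq_of_lt (by omega)
        show orb β ((k+1) % (m+1)) = β * orb β (k % (m+1)) - (betaStar β k : ℤ)
        rw [hstar k, if_neg hc, hmod1, orb_succ]
    · intro k
      exact orb_pos_le_term hm1 _ (by
        have := Nat.mod_lt k (show 0 < m+1 by omega); omega)
    · intro k; exact orb_le_one β _
  · have hstar : ∀ i, betaStar β i = betaDigit β 1 i := by
      intro i; rw [betaStar, dif_neg h]
    refine ⟨orb β, orb_zero β, ?_, orb_pos_nonterm hβ h, fun k => orb_le_one β _⟩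
    intro k
    rw [hstar, orb_succ]; rfl

end A0Proof
namespace A0Proof

section Digits
variable {β : ℝ} {u : ℕ → ℝ}
  (hu0 : u 0 = 1) (hurec : ∀ k, u (k+1) = β * u k - betaStar β k)
  (hupos : ∀ k, 0 < u k) (hule : ∀ k, u k ≤ 1) (hβ : 1 < β)

include hurec hupos hule hβ in
lemma star_nonneg : ∀ k, 0 ≤ betaStar β k := by
  intro k
  have h1 : (betaStar β k : ℝ) = β * u k - u (k+1) := by
    have := hurec k; linarith
  have h2 : (-1 : ℝ) < betaStar β k := by
    have := hupos k
    have := hule (k+1)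
    nlinarith
  have : (-1:ℤ) < betaStar β k := by exact_mod_cast h2
  omega

include hurec hupos hule hβ in
lemma star_lt_beta : ∀ k, (betaStar β k : ℝ) < β := by
  intro k
  have h1 : (betaStar β k : ℝ) = β * u k - u (k+1) := by
    have := hurec k; linarith
  have := hupos (k+1)
  have := hule k
  nlinarith [hupos k]

include hu0 hurec hupos hule hβ in
lemma star_zero_pos : 1 ≤ betaStar β 0 := by
  have h1 : (betaStar β 0 : ℝ) = β * u 0 - u 1 := by
    have := hurec 0; linarith
  have h2 : (0 : ℝ) < betaStar β 0 := by
    rw [h1, hu0, mul_one]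
    have := hupos 1
    have := hule 1
    linarith
  have : (0:ℤ) < betaStar β 0 := by exact_mod_cast h2
  omega

include hu0 hurec hβ in
lemma partial_sum : ∀ n, ∑ i ∈ Finset.range n, (betaStar β i : ℝ) * β⁻¹ ^ (i+1)
    = 1 - β⁻¹ ^ n * u n := by
  have hβ0 : β ≠ 0 := by positivity
  intro n
  induction n with
  | zero => simp [hu0]
  | succ n ih =>
    rw [Finset.sum_range_succ, ih, hurec n]
    have hinv : β⁻¹ ^ (n+1) * β = β⁻¹ ^ n := by
      rw [pow_succ]
      field_simp
    push_cast
    linear_combination (u n) * hinv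

end Digits

lemma param_dist {x y : ℝ} (hx : 1 < x) (hxy : x ≤ y) {n : ℕ} (hn : 1 ≤ n)
    (hpre : ∀ i, i < n → betaStar x i = betaStar y i) :
    y - x ≤ y^2 * x⁻¹ ^ n := by
  obtain ⟨u, hu0, hurec, hupos, hule⟩ := goodState hx
  have hy : 1 < y := lt_of_lt_of_le hx hxy
  obtain ⟨v, hv0, hvrec, hvpos, hvle⟩ := goodState hy
  have hx0 : (0:ℝ) < x := by linarith
  have hy0 : (0:ℝ) < y := by linarith
  have hxi : (0:ℝ) < x⁻¹ := by positivity
  have hyi : (0:ℝ) < y⁻¹ := by positivity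
  have hyx : y⁻¹ ≤ x⁻¹ := by
    apply inv_anti₀ hx0 hxy
  -- partial sums
  have hsx := partial_sum hu0 hurec hx n
  have hsy := partial_sum hv0 hvrec hy n
  have hsy' : ∑ i ∈ Finset.range n, (betaStar x i : ℝ) * y⁻¹ ^ (i+1)
      = 1 - y⁻¹ ^ n * v n := by
    rw [← hsy]
    apply Finset.sum_congr rfl
    intro i hi
    rw [hpre i (Finset.mem_range.mp hi)]
  set A := ∑ i ∈ Finset.range n, (betaStar x i : ℝ) * (x⁻¹ ^ (i+1) - y⁻¹ ^ (i+1)) with hA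
  have hAval : A = y⁻¹ ^ n * v n - x⁻¹ ^ n * u n := by
    rw [hA]
    have : ∀ i ∈ Finset.range n, (betaStar x i : ℝ) * (x⁻¹ ^ (i+1) - y⁻¹ ^ (i+1))
        = (betaStar x i : ℝ) * x⁻¹ ^ (i+1) - (betaStar x i : ℝ) * y⁻¹ ^ (i+1) := by
      intro i _; ring
    rw [Finset.sum_congr rfl this, Finset.sum_sub_distrib, hsx, hsy']
    ring
  have hAub : A ≤ x⁻¹ ^ n := by
    rw [hAval]
    have h1 : y⁻¹ ^ n * v n ≤ y⁻¹ ^ n := by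
      nlinarith [pow_pos hyi n, hvle n, hvpos n]
    have h2 : 0 < x⁻¹ ^ n * u n := mul_pos (pow_pos hxi n) (hupos n)
    have h3 : y⁻¹ ^ n ≤ x⁻¹ ^ n := pow_le_pow_left₀ hyi.le hyx n
    linarith
  have hterm : ∀ i ∈ Finset.range n, (0:ℝ) ≤ (betaStar x i : ℝ) * (x⁻¹ ^ (i+1) - y⁻¹ ^ (i+1)) := by
    intro i _
    have h1 : (0:ℝ) ≤ (betaStar x i : ℝ) := by
      exact_mod_cast star_nonneg hurec hupos hule hx i
    have h2 : y⁻¹ ^ (i+1) ≤ x⁻¹ ^ (i+1) := pow_le_pow_left₀ hyi.le hyx (i+1)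
    nlinarith
  have hAlb : (betaStar x 0 : ℝ) * (x⁻¹ ^ 1 - y⁻¹ ^ 1) ≤ A := by
    rw [hA]
    exact Finset.single_le_sum hterm (Finset.mem_range.mpr hn)
  have h0 : (1:ℝ) ≤ (betaStar x 0 : ℝ) := by
    exact_mod_cast star_zero_pos hu0 hurec hupos hule hx
  have hd : x⁻¹ - y⁻¹ ≤ A := by
    have h2 : y⁻¹ ^ 1 ≤ x⁻¹ ^ 1 := pow_le_pow_left₀ hyi.le hyx 1
    simp only [pow_one] at hAlb h2 ⊢
    nlinarith
  have hkey : x⁻¹ - y⁻¹ ≤ x⁻¹ ^ n := le_trans hd hAub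
  have hid : x⁻¹ - y⁻¹ = (y - x) / (x * y) := by
    field_simp
  rw [hid] at hkey
  rw [div_le_iff₀ (by positivity)] at hkey
  calc y - x ≤ x⁻¹ ^ n * (x * y) := hkey
    _ ≤ y^2 * x⁻¹ ^ n := by nlinarith [pow_pos hxi n]

end A0Proof
namespace A0Proof

/-- Reversed prefix of the quasi-expansion: rp β n = [e_{n-1}, ..., e_1, e_0]. -/
noncomputable def rp (β : ℝ) : ℕ → List ℤ
  | 0 => []
  | n+1 => betaStar β n :: rp β n

@[simp] lemma rp_length (β : ℝ) : ∀ n, (rp β n).length = n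
  | 0 => rfl
  | n+1 => by simp [rp, rp_length β n]

lemma rp_suffix {β : ℝ} : ∀ {n : ℕ} {a b : List ℤ}, rp β n = a ++ b → b = rp β b.length := by
  intro n
  induction n with
  | zero =>
    intro a b h
    rw [rp] at h
    have := List.append_eq_nil_iff.mp h.symm
    rw [this.2]; rfl
  | succ n ih =>
    intro a b h
    cases a with
    | nil =>
      rw [List.nil_append] at h
      rw [← h, rp_length]
    | cons x a' =>
      rw [rp] at h
      simp only [List.cons_append, List.cons.injEq] at h
      exact ih h.2

lemma rp_zero_block {β : ℝ} : ∀ k m, rp β (k + m) = List.replicate k 0 ++ rp β m →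
    ∀ j, j < k → betaStar β (m + j) = 0 := by
  intro k
  induction k with
  | zero => intro m h j hj; omega
  | succ k ih =>
    intro m h j hj
    rw [show k+1+m = (k+m)+1 by omega, rp, List.replicate_succ, List.cons_append,
      List.cons.injEq] at h
    rcases Nat.lt_succ_iff_lt_or_eq.mp hj with hlt | rfl
    · exact ih m h.2 j hlt
    · rw [Nat.add_comm] at h
      exact h.1

lemma rp_digits_eq {x y : ℝ} : ∀ {n : ℕ}, rp x n = rp y n →
    ∀ i, i < n → betaStar x i = betaStar y i := by
  intro n
  induction n with
  | zero => intro _ i hi; omega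
  | succ n ih =>
    intro h i hi
    rw [rp, rp, List.cons.injEq] at h
    rcases Nat.lt_succ_iff_lt_or_eq.mp hi with hlt | rfl
    · exact ih h.2 i hlt
    · exact h.1

lemma mem_rp {β : ℝ} : ∀ {n : ℕ} {x : ℤ}, x ∈ rp β n → ∃ i, i < n ∧ x = betaStar β i := by
  intro n
  induction n with
  | zero => intro x h; simp [rp] at h
  | succ n ih =>
    intro x h
    rw [rp, List.mem_cons] at h
    rcases h with rfl | h
    · exact ⟨n, by omega, rfl⟩
    · obtain ⟨i, hi, hx⟩ := ih h
      exact ⟨i, by omega, hx⟩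

/-- The (relative) length of the cylinder of a word, with the word stored in
reverse (most recent digit first). -/
noncomputable def tval (γ : ℝ) : List ℤ → ℝ
  | [] => 1
  | d :: l => min 1 (γ * tval γ l - d)

@[simp] lemma tval_nil (γ : ℝ) : tval γ [] = 1 := rfl

lemma tval_cons (γ : ℝ) (d : ℤ) (l : List ℤ) :
    tval γ (d :: l) = min 1 (γ * tval γ l - d) := rfl

lemma tval_le_one (γ : ℝ) : ∀ l, tval γ l ≤ 1
  | [] => le_refl 1
  | d :: l => min_le_left _ _

/-- Bridge: the cylinder length of a prefix of the quasi-expansion of 1 in base β,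
evaluated at any base γ ≥ β, is at least the state value u n > 0. -/
lemma tval_rp_pos {β γ : ℝ} (hβ : 1 < β) (hβγ : β ≤ γ) :
    ∀ n, 0 < tval γ (rp β n) := by
  obtain ⟨u, hu0, hurec, hupos, hule⟩ := goodState hβ
  have key : ∀ n, u n ≤ tval β (rp β n) ∧ tval β (rp β n) ≤ tval γ (rp β n) := by
    intro n
    induction n with
    | zero => rw [rp]; simp [hu0]
    | succ n ih =>
      obtain ⟨h1, h2⟩ := ih
      have hpos : 0 < tval β (rp β n) := lt_of_lt_of_le (hupos n) h1
      constructor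
      · rw [rp, tval_cons]
        have : u (n+1) = β * u n - betaStar β n := hurec n
        have hmin : u (n+1) ≤ β * tval β (rp β n) - betaStar β n := by
          have : β * u n ≤ β * tval β (rp β n) := by
            apply mul_le_mul_of_nonneg_left h1 (by linarith)
          linarith
        exact le_min (hule (n+1)) hmin
      · rw [rp, tval_cons, tval_cons]
        apply min_le_min (le_refl 1)
        have : β * tval β (rp β n) ≤ γ * tval γ (rp β n) := by
          calc β * tval β (rp β n) ≤ γ * tval β (rp β n) := by
                apply mul_le_mul_of_nonneg_right hβγ hpos.le
            _ ≤ γ * tval γ (rp β n) := by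
                apply mul_le_mul_of_nonneg_left h2 (by linarith)
        linarith
  intro n
  exact lt_of_lt_of_le (hupos n) (le_trans (key n).1 (key n).2)

/-- The no-long-zero-run predicate on reversed words: no block of C+1 zeros
occurs strictly before the last position. -/
def okP (C : ℕ) (l : List ℤ) : Prop :=
  ∀ a b : List ℤ, l = a ++ (List.replicate (C+1) 0 ++ b) → b = []

lemma okP_nil (C : ℕ) : okP C [] := by
  intro a b h
  have := List.append_eq_nil_iff.mp h.symm
  have := List.append_eq_nil_iff.mp this.2
  exact this.2

lemma okP_of_append {C : ℕ} {u l : List ℤ} (h : okP C (u ++ l)) : okP C l := by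
  intro a b hl
  exact h (u ++ a) b (by rw [hl, List.append_assoc])

lemma okP_of_cons {C : ℕ} {d : ℤ} {l : List ℤ} (h : okP C (d :: l)) : okP C l :=
  okP_of_append (u := [d]) h

lemma not_okP_replicate {C : ℕ} {l : List ℤ} (hl : l ≠ []) :
    ¬ okP C (List.replicate (C+1) 0 ++ l) := by
  intro h
  exact hl (h [] l (by simp))

/-- A prefix of the quasi-expansion of a base in E_C satisfies okP. -/
lemma okP_rp {β : ℝ} {C : ℕ}
    (hE : ∀ m, 1 ≤ m → ∃ j, j ≤ C ∧ betaStar β (m + j) ≠ 0) (n : ℕ) :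
    okP C (rp β n) := by
  intro a b h
  by_contra hb
  have hb' : b = rp β b.length := rp_suffix (by
    rw [h, List.append_assoc] :
    rp β n = (a ++ List.replicate (C+1) 0) ++ b)
  have hrb : List.replicate (C+1) 0 ++ b
      = rp β ((List.replicate (C+1) 0 ++ b).length) := rp_suffix (by rw [h])
  rw [List.length_append, List.length_replicate] at hrb
  have hkey : rp β ((C+1) + b.length) = List.replicate (C+1) 0 ++ rp β b.length := by
    rw [← hrb, ← hb']
  have hzero := rp_zero_block (C+1) b.length hkey
  have hlen : 1 ≤ b.length := List.length_pos_iff.mpr hb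
  obtain ⟨j, hj, hne⟩ := hE b.length hlen
  exact hne (hzero j (by omega))

end A0Proof
namespace A0Proof

/-- All words of length n (stored reversed) with digits in [0, M]. -/
noncomputable def WF (M : ℤ) : ℕ → Finset (List ℤ)
  | 0 => {[]}
  | n+1 => ((Finset.Icc 0 M) ×ˢ WF M n).image fun p => p.1 :: p.2

lemma mem_WF {M : ℤ} : ∀ {n : ℕ} {l : List ℤ},
    l ∈ WF M n ↔ (l.length = n ∧ ∀ x ∈ l, x ∈ Finset.Icc (0:ℤ) M) := by
  intro n
  induction n with
  | zero =>
    intro l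
    simp only [WF, Finset.mem_singleton]
    constructor
    · rintro rfl; simp
    · rintro ⟨h, -⟩; exact List.length_eq_zero_iff.mp h
  | succ n ih =>
    intro l
    simp only [WF, Finset.mem_image, Finset.mem_product]
    constructor
    · rintro ⟨⟨d, l'⟩, ⟨hd, hl'⟩, rfl⟩
      obtain ⟨hlen, hall⟩ := ih.mp hl'
      refine ⟨by simp [hlen], ?_⟩
      intro x hx
      rcases List.mem_cons.mp hx with rfl | hx
      · exact hd
      · exact hall x hx
    · rintro ⟨hlen, hall⟩
      cases l with
      | nil => simp at hlen
      | cons d l' =>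
        refine ⟨(d, l'), ⟨hall d (List.mem_cons_self), ih.mpr ⟨by simpa using hlen, ?_⟩⟩, rfl⟩
        intro x hx
        exact hall x (List.mem_cons_of_mem d hx)

lemma sum_WF_succ {M : ℤ} {n : ℕ} (f : List ℤ → ℝ) :
    ∑ l ∈ WF M (n+1), f l = ∑ d ∈ Finset.Icc (0:ℤ) M, ∑ l ∈ WF M n, f (d :: l) := by
  rw [WF, Finset.sum_image, Finset.sum_product]
  intro p _ q _ h
  simp only [List.cons.injEq] at h
  exact Prod.ext h.1 h.2

/-- Key arithmetic identity: sum of truncated child lengths. -/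
lemma sum_gmin : ∀ (N : ℕ) (s : ℝ), 0 ≤ s → s ≤ N + 1 →
    ∑ d ∈ Finset.Icc (0:ℤ) (N:ℤ), max 0 (min 1 (s - (d:ℝ))) = s := by
  intro N
  induction N with
  | zero =>
    intro s h0 h1
    have he : Finset.Icc (0:ℤ) ((0:ℕ):ℤ) = {0} := by norm_num
    rw [he, Finset.sum_singleton]
    norm_num at h1 ⊢
    rw [min_eq_right h1, max_eq_right h0]
  | succ N ih =>
    intro s h0 h1
    have hsplit : Finset.Icc (0:ℤ) (((N:ℕ):ℤ)+1) = insert (((N:ℕ):ℤ)+1) (Finset.Icc 0 ((N:ℕ):ℤ)) := by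
      ext x
      simp only [Finset.mem_Icc, Finset.mem_insert]
      omega
    rw [show ((N+1:ℕ):ℤ) = ((N:ℕ):ℤ)+1 by push_cast; ring, hsplit,
      Finset.sum_insert (by simp)]
    push_cast
    rcases le_or_gt s ((N:ℝ)+1) with hs | hs
    · have hterm : max 0 (min 1 (s - ((N:ℝ)+1))) = 0 := by
        apply max_eq_left
        have : s - ((N:ℝ)+1) ≤ 0 := by linarith
        exact le_trans (min_le_right _ _) this
      rw [hterm, ih s h0 hs]
      push_cast
      ring
    · have hconst : ∀ d ∈ Finset.Icc (0:ℤ) (N:ℤ), max 0 (min 1 (s - (d:ℝ))) = 1 := by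
        intro d hd
        obtain ⟨hd0, hdN⟩ := Finset.mem_Icc.mp hd
        have hd' : (d:ℝ) ≤ N := by exact_mod_cast hdN
        rw [min_eq_left (by linarith), max_eq_right (by norm_num)]
      rw [Finset.sum_congr rfl hconst, Finset.sum_const, Int.card_Icc]
      have hterm : max 0 (min 1 (s - ((N:ℝ)+1))) = s - ((N:ℝ)+1) := by
        rw [min_eq_right (by push_cast at h1 ⊢; linarith), max_eq_right (by linarith)]
      rw [hterm]
      simp only [sub_zero, nsmul_eq_mul]
      rw [show (((N:ℕ):ℤ)+1).toNat = N+1 by omega]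
      push_cast
      ring

section Machine
variable {γ : ℝ} {M : ℤ} {C : ℕ}
  (hγ1 : 1 < γ) (hγM : γ ≤ (M:ℝ) + 1) (hM : 1 ≤ M)

include hγ1 hγM hM in
lemma sum_tpos_cons (l : List ℤ) :
    ∑ d ∈ Finset.Icc (0:ℤ) M, max 0 (tval γ (d :: l)) = γ * max 0 (tval γ l) := by
  have hγ0 : (0:ℝ) < γ := by linarith
  rcases le_or_gt 0 (tval γ l) with h | h
  · have hs0 : 0 ≤ γ * tval γ l := by positivity
    have hs1 : γ * tval γ l ≤ (M:ℝ) + 1 := by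
      have := tval_le_one γ l
      nlinarith
    have hcast : ((M.toNat : ℤ)) = M := Int.toNat_of_nonneg (by omega)
    have hN := sum_gmin M.toNat (γ * tval γ l) hs0 (by
      rw [← hcast] at hs1
      exact_mod_cast hs1)
    rw [hcast] at hN
    simp only [tval_cons]
    rw [hN, max_eq_right h]
  · rw [max_eq_left h.le, mul_zero]
    apply Finset.sum_eq_zero
    intro d hd
    obtain ⟨hd0, _⟩ := Finset.mem_Icc.mp hd
    apply max_eq_left
    have hd0' : (0:ℝ) ≤ (d:ℝ) := by exact_mod_cast hd0
    have : γ * tval γ l - d < 0 := by nlinarith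
    rw [tval_cons]
    exact le_trans (min_le_right _ _) this.le

include hγ1 hγM hM in
lemma sum_tpos_append : ∀ (m : ℕ) (l : List ℤ),
    ∑ u ∈ WF M m, max 0 (tval γ (u ++ l)) = γ^m * max 0 (tval γ l) := by
  intro m
  induction m with
  | zero =>
    intro l
    simp [WF]
  | succ m ih =>
    intro l
    rw [sum_WF_succ (fun u => max 0 (tval γ (u ++ l))), Finset.sum_comm]
    have : ∀ u ∈ WF M m, ∑ d ∈ Finset.Icc (0:ℤ) M, max 0 (tval γ ((d :: u) ++ l))
        = γ * max 0 (tval γ (u ++ l)) := by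
      intro u _
      simp only [List.cons_append]
      exact sum_tpos_cons hγ1 hγM hM (u ++ l)
    rw [Finset.sum_congr rfl this, ← Finset.mul_sum, ih l, pow_succ]
    ring

include hγ1 in
lemma tpos_rep : ∀ (k : ℕ) (l : List ℤ),
    max 0 (tval γ l) ≤ max 0 (tval γ (List.replicate k 0 ++ l)) := by
  intro k
  induction k with
  | zero => intro l; simp
  | succ k ih =>
    intro l
    refine le_trans (ih l) ?_
    rw [List.replicate_succ, List.cons_append, tval_cons]
    set t := tval γ (List.replicate k 0 ++ l) with ht
    push_cast
    rw [sub_zero]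
    rcases le_or_gt 0 t with h | h
    · rw [max_eq_right h]
      refine le_max_of_le_right (le_min ?_ ?_)
      · exact tval_le_one γ _
      · nlinarith
    · rw [max_eq_left h.le]
      exact le_max_left _ _

/-- Admissible words with the run condition. -/
noncomputable def Gf (M : ℤ) (C : ℕ) (n : ℕ) : Finset (List ℤ) :=
  @Finset.filter _ (okP C) (Classical.decPred _) (WF M n)

lemma mem_Gf {M : ℤ} {C n : ℕ} {l : List ℤ} : l ∈ Gf M C n ↔ l ∈ WF M n ∧ okP C l := by
  rw [Gf]
  exact @Finset.mem_filter _ _ (Classical.decPred _) _ _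

/-- Total (relative) length of run-restricted cylinders. -/
noncomputable def Vs (γ : ℝ) (M : ℤ) (C : ℕ) (n : ℕ) : ℝ :=
  ∑ l ∈ Gf M C n, max 0 (tval γ l)

lemma Vs_nonneg (γ : ℝ) (M : ℤ) (C n : ℕ) : 0 ≤ Vs γ M C n :=
  Finset.sum_nonneg fun _ _ => le_max_left _ _

lemma Vs_zero (γ : ℝ) (M : ℤ) (C : ℕ) : Vs γ M C 0 = 1 := by
  have : Gf M C 0 = {[]} := by
    apply Finset.ext
    intro l
    rw [mem_Gf]
    simp only [WF, Finset.mem_singleton]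
    constructor
    · rintro ⟨rfl, -⟩; rfl
    · rintro rfl; exact ⟨rfl, okP_nil C⟩
  rw [Vs, this]
  simp

include hγ1 hγM hM in
lemma Vs_succ (n : ℕ) : Vs γ M C (n+1) ≤ γ * Vs γ M C n := by
  have hsub : Gf M C (n+1) ⊆ ((Finset.Icc 0 M) ×ˢ Gf M C n).image fun p => p.1 :: p.2 := by
    intro l hl
    obtain ⟨hlW, hlP⟩ := mem_Gf.mp hl
    rw [WF] at hlW
    obtain ⟨⟨d, l'⟩, hp, rfl⟩ := Finset.mem_image.mp hlW
    obtain ⟨hd, hl'⟩ := Finset.mem_product.mp hp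
    exact Finset.mem_image.mpr ⟨(d, l'), Finset.mem_product.mpr
      ⟨hd, mem_Gf.mpr ⟨hl', okP_of_cons hlP⟩⟩, rfl⟩
  calc Vs γ M C (n+1)
      ≤ ∑ l ∈ ((Finset.Icc 0 M) ×ˢ Gf M C n).image (fun p => p.1 :: p.2),
          max 0 (tval γ l) := by
        apply Finset.sum_le_sum_of_subset_of_nonneg hsub
        intros; exact le_max_left _ _
    _ = ∑ p ∈ (Finset.Icc 0 M) ×ˢ Gf M C n, max 0 (tval γ (p.1 :: p.2)) := by
        apply Finset.sum_image
        intro p _ q _ h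
        simp only [List.cons.injEq] at h
        exact Prod.ext h.1 h.2
    _ = ∑ d ∈ Finset.Icc (0:ℤ) M, ∑ l ∈ Gf M C n, max 0 (tval γ (d :: l)) := by
        rw [Finset.sum_product]
    _ = ∑ l ∈ Gf M C n, ∑ d ∈ Finset.Icc (0:ℤ) M, max 0 (tval γ (d :: l)) :=
        Finset.sum_comm
    _ = ∑ l ∈ Gf M C n, γ * max 0 (tval γ l) :=
        Finset.sum_congr rfl fun l _ => sum_tpos_cons hγ1 hγM hM l
    _ = γ * Vs γ M C n := by rw [Vs, ← Finset.mul_sum]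

include hγ1 hγM hM in
lemma Vs_block {n : ℕ} (hn : 1 ≤ n) :
    Vs γ M C (n + (C+1)) ≤ (γ^(C+1) - 1) * Vs γ M C n := by
  classical
  set rep : List ℤ := List.replicate (C+1) 0 with hrep
  have hrepW : rep ∈ WF M (C+1) := by
    rw [mem_WF]
    constructor
    · simp [hrep]
    · intro x hx
      rw [hrep] at hx
      rw [List.eq_of_mem_replicate hx]
      simp only [Finset.mem_Icc]
      omega
  have hsub : Gf M C (n + (C+1)) ⊆
      (((WF M (C+1)).erase rep) ×ˢ Gf M C n).image fun p => p.1 ++ p.2 := by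
    intro l hl
    obtain ⟨hlW, hlP⟩ := mem_Gf.mp hl
    obtain ⟨hlen, hall⟩ := mem_WF.mp hlW
    have hdec : l = l.take (C+1) ++ l.drop (C+1) := (List.take_append_drop _ _).symm
    have htlen : (l.take (C+1)).length = C+1 := by
      rw [List.length_take]
      omega
    have hdlen : (l.drop (C+1)).length = n := by
      rw [List.length_drop]
      omega
    have htW : l.take (C+1) ∈ WF M (C+1) :=
      mem_WF.mpr ⟨htlen, fun x hx => hall x (List.take_subset _ _ hx)⟩
    have hdW : l.drop (C+1) ∈ WF M n :=
      mem_WF.mpr ⟨hdlen, fun x hx => hall x (List.drop_subset _ _ hx)⟩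
    have hdP : okP C (l.drop (C+1)) := by
      apply okP_of_append (u := l.take (C+1))
      rw [List.take_append_drop]
      exact hlP
    have hne : l.take (C+1) ≠ rep := by
      intro heq
      have : ¬ okP C (rep ++ l.drop (C+1)) := by
        apply not_okP_replicate
        intro h0
        rw [h0] at hdlen
        simp at hdlen
        omega
      rw [← heq, List.take_append_drop] at this
      exact this hlP
    exact Finset.mem_image.mpr ⟨(l.take (C+1), l.drop (C+1)),
      Finset.mem_product.mpr ⟨Finset.mem_erase.mpr ⟨hne, htW⟩, mem_Gf.mpr ⟨hdW, hdP⟩⟩,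
      by rw [← hdec]⟩
  have hinj : ∀ p ∈ ((WF M (C+1)).erase rep) ×ˢ Gf M C n,
      ∀ q ∈ ((WF M (C+1)).erase rep) ×ˢ Gf M C n,
      p.1 ++ p.2 = q.1 ++ q.2 → p = q := by
    intro p hp q hq h
    obtain ⟨hp1, _⟩ := Finset.mem_product.mp hp
    obtain ⟨hq1, _⟩ := Finset.mem_product.mp hq
    have hp1' := (mem_WF.mp (Finset.mem_of_mem_erase hp1)).1
    have hq1' := (mem_WF.mp (Finset.mem_of_mem_erase hq1)).1
    obtain ⟨h1, h2⟩ := List.append_inj h (hp1'.trans hq1'.symm)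
    exact Prod.ext h1 h2
  calc Vs γ M C (n + (C+1))
      ≤ ∑ l ∈ (((WF M (C+1)).erase rep) ×ˢ Gf M C n).image (fun p => p.1 ++ p.2),
          max 0 (tval γ l) := by
        apply Finset.sum_le_sum_of_subset_of_nonneg hsub
        intros; exact le_max_left _ _
    _ = ∑ p ∈ ((WF M (C+1)).erase rep) ×ˢ Gf M C n, max 0 (tval γ (p.1 ++ p.2)) :=
        Finset.sum_image hinj
    _ = ∑ u ∈ (WF M (C+1)).erase rep, ∑ l ∈ Gf M C n, max 0 (tval γ (u ++ l)) := by
        rw [Finset.sum_product]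
    _ = ∑ l ∈ Gf M C n, ∑ u ∈ (WF M (C+1)).erase rep, max 0 (tval γ (u ++ l)) :=
        Finset.sum_comm
    _ ≤ ∑ l ∈ Gf M C n, (γ^(C+1) - 1) * max 0 (tval γ l) := by
        apply Finset.sum_le_sum
        intro l _
        rw [Finset.sum_erase_eq_sub hrepW, sum_tpos_append hγ1 hγM hM]
        have := tpos_rep hγ1 (C+1) l
        rw [← hrep] at this
        linarith
    _ = (γ^(C+1) - 1) * Vs γ M C n := by rw [Vs, ← Finset.mul_sum]

end Machine

end A0Proof
namespace A0Proof

/-- Realizable run-restricted words: okP plus positive cylinder length. -/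
noncomputable def Gp (γ : ℝ) (M : ℤ) (C : ℕ) (n : ℕ) : Finset (List ℤ) :=
  @Finset.filter _ (fun l => okP C l ∧ 0 < tval γ l)
    (Classical.decPred _) (WF M n)

lemma mem_Gp {γ : ℝ} {M : ℤ} {C n : ℕ} {l : List ℤ} :
    l ∈ Gp γ M C n ↔ l ∈ WF M n ∧ okP C l ∧ 0 < tval γ l := by
  rw [Gp]
  exact @Finset.mem_filter _ _ (Classical.decPred _) _ _

section Count
variable {γ : ℝ} {M : ℤ} {C : ℕ}
  (hγ1 : 1 < γ) (hγM : γ ≤ (M:ℝ) + 1) (hM : 1 ≤ M)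

lemma card_Gp_zero : ((Gp γ M C 0).card : ℝ) ≤ 1 := by
  have : Gp γ M C 0 ⊆ WF M 0 := fun l hl => (mem_Gp.mp hl).1
  have h2 := Finset.card_le_card this
  have : (WF M 0).card = 1 := by rw [WF]; rfl
  rw [this] at h2
  exact_mod_cast h2

include hγ1 in
lemma count_step (n : ℕ) :
    ((Gp γ M C (n+1)).card : ℝ) ≤ Vs γ M C (n+1) + (Gp γ M C n).card := by
  classical
  set S1 : Finset (List ℤ) := (Gp γ M C (n+1)).filter (fun l => 1 ≤ tval γ l) with hS1
  set S2 : Finset (List ℤ) := (Gp γ M C (n+1)).filter (fun l => tval γ l < 1) with hS2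
  have hsplit : (Gp γ M C (n+1)).card ≤ S1.card + S2.card := by
    rw [← Finset.card_union_of_disjoint ?disj]
    case disj =>
      rw [Finset.disjoint_filter]
      intro l _ h1 h2
      linarith
    apply Finset.card_le_card
    intro l hl
    rcases le_or_gt 1 (tval γ l) with h | h
    · exact Finset.mem_union_left _ (Finset.mem_filter.mpr ⟨hl, h⟩)
    · exact Finset.mem_union_right _ (Finset.mem_filter.mpr ⟨hl, h⟩)
  -- card S1 ≤ Vs (n+1)
  have hfull : (S1.card : ℝ) ≤ Vs γ M C (n+1) := by
    have h1 : (S1.card : ℝ) = ∑ l ∈ S1, (1:ℝ) := by simp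
    have h2 : ∑ l ∈ S1, (1:ℝ) ≤ ∑ l ∈ S1, max 0 (tval γ l) := by
      apply Finset.sum_le_sum
      intro l hl
      obtain ⟨_, h1l⟩ := Finset.mem_filter.mp hl
      exact le_max_of_le_right h1l
    have hsub : S1 ⊆ Gf M C (n+1) := by
      intro l hl
      obtain ⟨hG, _⟩ := Finset.mem_filter.mp hl
      obtain ⟨hW, hP, _⟩ := mem_Gp.mp hG
      exact mem_Gf.mpr ⟨hW, hP⟩
    have h3 : ∑ l ∈ S1, max 0 (tval γ l) ≤ Vs γ M C (n+1) := by
      apply Finset.sum_le_sum_of_subset_of_nonneg hsub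
      intros; exact le_max_left _ _
    linarith
  -- card S2 ≤ card Gp n
  have hnonfull : S2.card ≤ (Gp γ M C n).card := by
    apply Finset.card_le_card_of_injOn (fun l => l.tail)
    · intro l hl
      obtain ⟨hG, hlt⟩ := Finset.mem_filter.mp hl
      obtain ⟨hW, hP, hpos⟩ := mem_Gp.mp hG
      obtain ⟨hlen, hall⟩ := mem_WF.mp hW
      cases l with
      | nil => simp at hlen
      | cons d l' =>
        simp only [List.tail_cons]
        have hl'len : l'.length = n := by simpa using hlen
        have hd : d ∈ Finset.Icc (0:ℤ) M := hall d (List.mem_cons_self)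
        have hd0 : (0:ℝ) ≤ (d:ℝ) := by
          have := (Finset.mem_Icc.mp hd).1
          exact_mod_cast this
        have hpos' : 0 < tval γ l' := by
          rw [tval_cons] at hpos
          have h2 : 0 < γ * tval γ l' - d := lt_of_lt_of_le hpos (min_le_right _ _)
          nlinarith [lt_of_lt_of_le hγ1 (le_refl γ)]
        exact mem_Gp.mpr ⟨mem_WF.mpr ⟨hl'len, fun x hx => hall x (List.mem_cons_of_mem d hx)⟩,
          okP_of_cons hP, hpos'⟩
    · intro l hl k hk htail
      obtain ⟨hGl, hltl⟩ := Finset.mem_filter.mp hl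
      obtain ⟨hWl, _, hposl⟩ := mem_Gp.mp hGl
      obtain ⟨hGk, hltk⟩ := Finset.mem_filter.mp hk
      obtain ⟨hWk, _, hposk⟩ := mem_Gp.mp hGk
      obtain ⟨hlenl, halll⟩ := mem_WF.mp hWl
      obtain ⟨hlenk, hallk⟩ := mem_WF.mp hWk
      cases l with
      | nil => simp at hlenl
      | cons d l' =>
        cases k with
        | nil => simp at hlenk
        | cons d2 k' =>
          simp only [List.tail_cons] at htail
          subst htail
          have hvl : tval γ (d :: l') = γ * tval γ l' - d := by
            rw [tval_cons]
            apply min_eq_right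
            rcases le_or_gt (γ * tval γ l' - d) 1 with h | h
            · exact h
            · exfalso
              rw [tval_cons, min_eq_left h.le] at hltl
              linarith
          have hvk : tval γ (d2 :: l') = γ * tval γ l' - d2 := by
            rw [tval_cons]
            apply min_eq_right
            rcases le_or_gt (γ * tval γ l' - d2) 1 with h | h
            · exact h
            · exfalso
              rw [tval_cons, min_eq_left h.le] at hltk
              linarith
          have h1 : 0 < γ * tval γ l' - d := by rw [← hvl]; exact hposl
          have h2 : γ * tval γ l' - d < 1 := by rw [← hvl]; exact hltl
          have h3 : 0 < γ * tval γ l' - d2 := by rw [← hvk]; exact hposk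
          have h4 : γ * tval γ l' - d2 < 1 := by rw [← hvk]; exact hltk
          have : d = d2 := by
            have hd : ((d - d2 : ℤ) : ℝ) < 1 := by push_cast; linarith
            have hd2 : (-1 : ℝ) < ((d - d2 : ℤ) : ℝ) := by push_cast; linarith
            have : (d - d2 : ℤ) < 1 := by exact_mod_cast hd
            have : (-1 : ℤ) < (d - d2 : ℤ) := by exact_mod_cast hd2
            omega
          rw [this]
  calc ((Gp γ M C (n+1)).card : ℝ) ≤ (S1.card : ℝ) + (S2.card : ℝ) := by
        exact_mod_cast hsplit
    _ ≤ Vs γ M C (n+1) + (Gp γ M C n).card := by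
        have : (S2.card : ℝ) ≤ ((Gp γ M C n).card : ℝ) := by exact_mod_cast hnonfull
        linarith

end Count

end A0Proof
namespace A0Proof

section Growth
variable {γ : ℝ} {M : ℤ} {C : ℕ}
  (hγ1 : 1 < γ) (hγM : γ ≤ (M:ℝ) + 1) (hM : 1 ≤ M)

include hγ1 hγM hM in
lemma Vs_chain (a : ℕ) : ∀ k, Vs γ M C (a + k) ≤ γ^k * Vs γ M C a := by
  intro k
  induction k with
  | zero => simp
  | succ k ih =>
    calc Vs γ M C (a + (k+1)) = Vs γ M C ((a+k) + 1) := by ring_nf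
      _ ≤ γ * Vs γ M C (a + k) := Vs_succ hγ1 hγM hM _
      _ ≤ γ * (γ^k * Vs γ M C a) := by nlinarith [Vs_nonneg γ M C (a+k)]
      _ = γ^(k+1) * Vs γ M C a := by ring

include hγ1 hγM hM in
lemma Vs_one : Vs γ M C 1 ≤ γ := by
  have := Vs_succ (C := C) hγ1 hγM hM 0
  rw [Vs_zero] at this
  simpa using this

include hγ1 hγM hM in
lemma Vs_main : ∀ j k, 1 ≤ k → k ≤ 1 + j*(C+1) →
    Vs γ M C k ≤ γ^(C+2) * (max 1 (γ^(C+1) - 1))^j := by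
  set z := max 1 (γ^(C+1) - 1) with hz
  have hz1 : (1:ℝ) ≤ z := le_max_left _ _
  have hzρ : γ^(C+1) - 1 ≤ z := le_max_right _ _
  have hγ0 : (0:ℝ) < γ := by linarith
  have hγpow : (0:ℝ) < γ^(C+2) := by positivity
  have hρ0 : (0:ℝ) ≤ γ^(C+1) - 1 := by
    have : (1:ℝ) ≤ γ^(C+1) := one_le_pow₀ hγ1.le
    linarith
  have hchain_bound : ∀ k, 1 ≤ k → k ≤ C+2 → Vs γ M C k ≤ γ^(C+2) := by
    intro k hk1 hk2
    have h1 : Vs γ M C (1 + (k-1)) ≤ γ^(k-1) * Vs γ M C 1 := Vs_chain hγ1 hγM hM 1 (k-1)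
    rw [show 1 + (k-1) = k by omega] at h1
    have h2 : γ^(k-1) * Vs γ M C 1 ≤ γ^(k-1) * γ := by
      have := Vs_one (C := C) hγ1 hγM hM
      nlinarith [pow_pos hγ0 (k-1)]
    have h3 : γ^(k-1) * γ = γ^k := by
      rw [← pow_succ]
      congr 1
      omega
    have h4 : γ^k ≤ γ^(C+2) := pow_le_pow_right₀ hγ1.le (by omega)
    linarith
  intro j
  induction j with
  | zero =>
    intro k hk1 hk2
    simp only [pow_zero, mul_one]
    exact hchain_bound k hk1 (by omega)
  | succ j ih =>
    intro k hk1 hk2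
    rcases le_or_gt k (1 + j*(C+1)) with h | h
    · have := ih k hk1 h
      have hzj : z^j ≤ z^(j+1) := by
        calc z^j = z^j * 1 := by ring
          _ ≤ z^j * z := by nlinarith [pow_pos (lt_of_lt_of_le one_pos hz1) j]
          _ = z^(j+1) := by ring
      nlinarith
    · rcases le_or_gt k (C+2) with hk | hk
      · have := hchain_bound k hk1 hk
        have hzp : (1:ℝ) ≤ z^(j+1) := one_le_pow₀ hz1
        nlinarith
      · have hk' : 1 ≤ k - (C+1) := by omega
        have hk'' : k - (C+1) ≤ 1 + j*(C+1) := by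
          have h5 : k ≤ 1 + (j*(C+1) + (C+1)) := by
            have : (j+1)*(C+1) = j*(C+1) + (C+1) := by ring
            omega
          obtain ⟨q, hq⟩ : ∃ q, j*(C+1) = q := ⟨_, rfl⟩
          rw [hq] at h5 ⊢
          omega
        have hblock := Vs_block (γ := γ) (M := M) (C := C) hγ1 hγM hM hk'
        rw [show (k - (C+1)) + (C+1) = k by omega] at hblock
        have hih := ih (k - (C+1)) hk' hk''
        have hnn := Vs_nonneg γ M C (k - (C+1))
        calc Vs γ M C k ≤ (γ^(C+1) - 1) * Vs γ M C (k - (C+1)) := hblock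
          _ ≤ z * Vs γ M C (k - (C+1)) := by nlinarith
          _ ≤ z * (γ^(C+2) * z^j) := by nlinarith [lt_of_lt_of_le one_pos hz1]
          _ = γ^(C+2) * z^(j+1) := by ring

include hγ1 hγM hM in
lemma count_total : ∀ n, ((Gp γ M C n).card : ℝ) ≤ 1 + ∑ k ∈ Finset.Icc 1 n, Vs γ M C k := by
  intro n
  induction n with
  | zero =>
    simpa using card_Gp_zero (γ := γ) (M := M) (C := C)
  | succ n ih =>
    have hstep := count_step (M := M) (C := C) hγ1 n
    have hsplit : Finset.Icc 1 (n+1) = insert (n+1) (Finset.Icc 1 n) := by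
      ext x
      simp only [Finset.mem_Icc, Finset.mem_insert]
      omega
    rw [hsplit, Finset.sum_insert (by simp)]
    linarith

include hγ1 hγM hM in
lemma card_bound {n j : ℕ} (hn1 : 1 ≤ n) (hnj : n ≤ 1 + j*(C+1)) :
    ((Gp γ M C n).card : ℝ) ≤ 1 + n * (γ^(C+2) * (max 1 (γ^(C+1) - 1))^j) := by
  have h1 := count_total (C := C) hγ1 hγM hM n
  have h2 : ∑ k ∈ Finset.Icc 1 n, Vs γ M C k
      ≤ ∑ k ∈ Finset.Icc 1 n, (γ^(C+2) * (max 1 (γ^(C+1) - 1))^j) := by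
    apply Finset.sum_le_sum
    intro k hk
    obtain ⟨hk1, hk2⟩ := Finset.mem_Icc.mp hk
    exact Vs_main hγ1 hγM hM j k hk1 (le_trans hk2 hnj)
  rw [Finset.sum_const, Nat.card_Icc] at h2
  simp only [nsmul_eq_mul] at h2
  have : ((n + 1 - 1 : ℕ) : ℝ) = (n : ℝ) := by norm_num
  rw [this] at h2
  linarith

end Growth

end A0Proof
namespace A0Proof

/-- The set of β > 1 whose zero-runs are bounded by C. -/
def EC (C : ℕ) : Set ℝ := {β | 1 < β ∧ ∀ n, 1 ≤ n → zeroRunLen β n ≤ (C : ℕ∞)}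

lemma EC_run {β : ℝ} {C : ℕ} (hβ : β ∈ EC C) :
    ∀ m, 1 ≤ m → ∃ j, j ≤ C ∧ betaStar β (m + j) ≠ 0 := by
  intro m hm
  by_contra h
  push_neg at h
  have hmem : (C+1) ∈ {k : ℕ | ∀ j, j < k → betaStar β (m + j) = 0} := by
    intro j hj
    exact h j (by omega)
  have hle : ((C+1 : ℕ) : ℕ∞) ≤ zeroRunLen β m := by
    rw [zeroRunLen]
    exact le_iSup₂ (f := fun (k : ℕ) (_ : k ∈ {k : ℕ | ∀ j, j < k → betaStar β (m + j) = 0})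
      => (k : ℕ∞)) (C+1) hmem
  have hcontra := le_trans hle (hβ.2 m hm)
  have : C + 1 ≤ C := by exact_mod_cast hcontra
  omega

lemma rp_mem_Gp {β β2 : ℝ} {C : ℕ} (hβ1 : 1 < β) (hβ2 : β ≤ β2)
    (hE : ∀ m, 1 ≤ m → ∃ j, j ≤ C ∧ betaStar β (m + j) ≠ 0) (n : ℕ) :
    rp β n ∈ Gp β2 ⌊β2⌋ C n := by
  obtain ⟨u, hu0, hurec, hupos, hule⟩ := goodState hβ1
  apply mem_Gp.mpr
  refine ⟨mem_WF.mpr ⟨rp_length β n, ?_⟩, okP_rp hE n, tval_rp_pos hβ1 hβ2 n⟩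
  intro x hx
  obtain ⟨i, _, rfl⟩ := mem_rp hx
  rw [Finset.mem_Icc]
  constructor
  · exact star_nonneg hurec hupos hule hβ1 i
  · apply Int.le_floor.mpr
    have := star_lt_beta hurec hupos hule hβ1 i
    linarith

lemma EC_inter_null {C : ℕ} {β1 β2 : ℝ} (h1 : 1 < β1) (h12 : β1 ≤ β2)
    (hgap : β2^(C+1) - 1 < β1^(C+1)) :
    volume (EC C ∩ Set.Icc β1 β2) = 0 := by
  have hβ2 : 1 < β2 := lt_of_lt_of_le h1 h12
  set M : ℤ := ⌊β2⌋ with hMdef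
  have hM : 1 ≤ M := by
    apply Int.le_floor.mpr
    exact_mod_cast hβ2.le
  have hγM : β2 ≤ (M:ℝ) + 1 := (Int.lt_floor_add_one β2).le
  set z : ℝ := max 1 (β2^(C+1) - 1) with hzdef
  have hz1 : (1:ℝ) ≤ z := le_max_left _ _
  have hzlt : z < β1^(C+1) := by
    apply max_lt
    · exact one_lt_pow₀ h1 (by omega)
    · exact hgap
  have h10 : (0:ℝ) < β1 := by linarith
  have hb1i : (0:ℝ) < β1⁻¹ := by positivity
  have hb1i1 : β1⁻¹ < 1 := by
    rw [inv_lt_one_iff₀]; right; exact h1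
  -- Step A : covering estimate for every n ≥ 1
  have cover : ∀ n, 1 ≤ n → volume (EC C ∩ Set.Icc β1 β2) ≤
      ((Gp β2 M C n).card : ENNReal) * ENNReal.ofReal (β2^2 * β1⁻¹^n) := by
    intro n hn
    have hsub : EC C ∩ Set.Icc β1 β2 ⊆
        ⋃ l ∈ Gp β2 M C n, {β | β ∈ EC C ∩ Set.Icc β1 β2 ∧ rp β n = l} := by
      intro β hβ
      obtain ⟨hβE, hβI⟩ := hβ
      apply Set.mem_biUnion (rp_mem_Gp hβE.1 hβI.2 (EC_run hβE) n)
      exact ⟨⟨hβE, hβI⟩, rfl⟩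
    calc volume (EC C ∩ Set.Icc β1 β2)
        ≤ volume (⋃ l ∈ Gp β2 M C n, {β | β ∈ EC C ∩ Set.Icc β1 β2 ∧ rp β n = l}) :=
          measure_mono hsub
      _ ≤ ∑ l ∈ Gp β2 M C n, volume {β | β ∈ EC C ∩ Set.Icc β1 β2 ∧ rp β n = l} :=
          measure_biUnion_finset_le _ _
      _ ≤ ∑ _l ∈ Gp β2 M C n, ENNReal.ofReal (β2^2 * β1⁻¹^n) := by
          apply Finset.sum_le_sum
          intro l _
          set T : Set ℝ := {β | β ∈ EC C ∩ Set.Icc β1 β2 ∧ rp β n = l} with hT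
          have hdiam : EMetric.diam T ≤ ENNReal.ofReal (β2^2 * β1⁻¹^n) := by
            apply EMetric.diam_le
            intro x hx y hy
            obtain ⟨⟨hxE, hxI⟩, hxl⟩ := hx
            obtain ⟨⟨hyE, hyI⟩, hyl⟩ := hy
            rw [edist_dist]
            apply ENNReal.ofReal_le_ofReal
            have hkey : ∀ a b : ℝ, a ∈ EC C → b ∈ EC C → a ∈ Set.Icc β1 β2 →
                b ∈ Set.Icc β1 β2 → a ≤ b → rp a n = rp b n → b - a ≤ β2^2 * β1⁻¹^n := by
              intro a b haE hbE haI hbI hab hpre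
              have ha0 : (0:ℝ) < a := lt_trans one_pos haE.1
              have hd := param_dist haE.1 hab hn (rp_digits_eq hpre)
              have hle1 : b^2 ≤ β2^2 := by nlinarith [haE.1, hbI.2]
              have hle2 : a⁻¹^n ≤ β1⁻¹^n := by
                apply pow_le_pow_left₀ (inv_nonneg.mpr ha0.le)
                exact inv_anti₀ h10 haI.1
              have hp1 : (0:ℝ) ≤ a⁻¹^n := pow_nonneg (inv_nonneg.mpr ha0.le) n
              have hp2 : (0:ℝ) < b^2 := by nlinarith [haE.1, hab]
              calc b - a ≤ b^2 * a⁻¹^n := hd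
                _ ≤ β2^2 * β1⁻¹^n := by nlinarith
            rcases le_total x y with hxy | hyx
            · rw [Real.dist_eq, abs_of_nonpos (by linarith)]
              have := hkey x y hxE hyE hxI hyI hxy (hxl.trans hyl.symm)
              linarith
            · rw [Real.dist_eq, abs_of_nonneg (by linarith)]
              exact hkey y x hyE hxE hyI hxI hyx (hyl.trans hxl.symm)
          exact le_trans (Real.volume_le_diam T) hdiam
      _ = ((Gp β2 M C n).card : ENNReal) * ENNReal.ofReal (β2^2 * β1⁻¹^n) := by
          rw [Finset.sum_const, nsmul_eq_mul]
  -- Step B : numeric bound along n = 1 + j*(C+1)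
  set a : ℕ → ℝ := fun j =>
    (1 + ((1 + j*(C+1) : ℕ) : ℝ) * (β2^(C+2) * z^j)) * (β2^2 * β1⁻¹^(1 + j*(C+1)))
    with hadef
  have ha_bound : ∀ j, volume (EC C ∩ Set.Icc β1 β2) ≤ ENNReal.ofReal (a j) := by
    intro j
    set n : ℕ := 1 + j*(C+1) with hndef
    have hn1 : 1 ≤ n := by omega
    have hcard := card_bound (γ := β2) (M := M) (C := C) hβ2 hγM hM hn1 (le_of_eq hndef)
    have hD : (0:ℝ) ≤ β2^2 * β1⁻¹^n := by positivity
    have hcard' : ((Gp β2 M C n).card : ℝ) * (β2^2 * β1⁻¹^n) ≤ a j :=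
      mul_le_mul_of_nonneg_right hcard hD
    calc volume (EC C ∩ Set.Icc β1 β2)
        ≤ ((Gp β2 M C n).card : ENNReal) * ENNReal.ofReal (β2^2 * β1⁻¹^n) := cover n hn1
      _ = ENNReal.ofReal (((Gp β2 M C n).card : ℝ) * (β2^2 * β1⁻¹^n)) := by
          rw [← ENNReal.ofReal_natCast ((Gp β2 M C n).card),
            ← ENNReal.ofReal_mul (by positivity)]
      _ ≤ ENNReal.ofReal (a j) := ENNReal.ofReal_le_ofReal hcard'
  -- Step C : the bound tends to zero
  set q : ℝ := β1⁻¹^(C+1) with hqdef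
  set r : ℝ := z * q with hrdef
  have hq0 : (0:ℝ) ≤ q := by positivity
  have hq1 : q < 1 := pow_lt_one₀ hb1i.le hb1i1 (by omega)
  have hz0 : (0:ℝ) < z := lt_of_lt_of_le one_pos hz1
  have hr0 : (0:ℝ) ≤ r := mul_nonneg hz0.le hq0
  have hqpos : (0:ℝ) < q := by positivity
  have hr1 : r < 1 := by
    have hprod : q * β1^(C+1) = 1 := by
      rw [hqdef, ← mul_pow, inv_mul_cancel₀ (ne_of_gt h10), one_pow]
    calc r = z * q := hrdef
      _ < β1^(C+1) * q := mul_lt_mul_of_pos_right hzlt hqpos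
      _ = 1 := by rw [mul_comm]; exact hprod
  have ht1 : Filter.Tendsto (fun j : ℕ => q^j) Filter.atTop (nhds 0) :=
    tendsto_pow_atTop_nhds_zero_of_lt_one hq0 hq1
  have ht3 : Filter.Tendsto (fun j : ℕ => r^j) Filter.atTop (nhds 0) :=
    tendsto_pow_atTop_nhds_zero_of_lt_one hr0 hr1
  have ht2 : Filter.Tendsto (fun j : ℕ => (j:ℝ) * r^j) Filter.atTop (nhds 0) := by
    have hnorm : ‖r‖ < 1 := by
      rw [Real.norm_eq_abs, abs_of_nonneg hr0]; exact hr1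
    have hsum := summable_pow_mul_geometric_of_norm_lt_one 1 hnorm
    have := hsum.tendsto_atTop_zero
    simpa [pow_one] using this
  have haeq : ∀ j : ℕ, (β2^2*β1⁻¹) * q^j + ((β2^2*β1⁻¹*β2^(C+2)) * r^j
      + (β2^2*β1⁻¹*β2^(C+2)*((C:ℝ)+1)) * ((j:ℝ) * r^j)) = a j := by
    intro j
    have hpow : β1⁻¹^(1 + j*(C+1)) = β1⁻¹ * q^j := by
      rw [pow_add, pow_one, pow_mul', hqdef]
    have hzq : z^j * q^j = r^j := by rw [hrdef, mul_pow]
    rw [hadef]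
    simp only
    rw [hpow]
    push_cast
    rw [← hzq]
    ring
  have htend : Filter.Tendsto a Filter.atTop (nhds 0) := by
    have hcomb := (ht1.const_mul (β2^2*β1⁻¹)).add
      ((ht3.const_mul (β2^2*β1⁻¹*β2^(C+2))).add
        (ht2.const_mul (β2^2*β1⁻¹*β2^(C+2)*((C:ℝ)+1))))
    norm_num at hcomb
    exact hcomb.congr haeq
  have hofReal : Filter.Tendsto (fun j => ENNReal.ofReal (a j)) Filter.atTop (nhds 0) := by
    rw [← ENNReal.ofReal_zero]
    exact ENNReal.tendsto_ofReal htend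
  exact le_zero_iff.mp (ge_of_tendsto' hofReal ha_bound)

end A0Proof
namespace A0Proof

lemma EC_null (C : ℕ) : volume (EC C) = 0 := by
  apply measure_null_of_locally_null
  intro β0 hβ0
  have h1 : 1 < β0 := hβ0.1
  have hcont : ContinuousAt (fun x : ℝ => x^(C+1)) β0 := (continuous_pow (C+1)).continuousAt
  rw [Metric.continuousAt_iff] at hcont
  obtain ⟨δ, hδ0, hδ⟩ := hcont (1/2) (by norm_num)
  set β1 : ℝ := max ((1+β0)/2) (β0 - δ/2) with hβ1def
  set β2 : ℝ := β0 + δ/2 with hβ2def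
  have hβ11 : 1 < β1 := lt_max_of_lt_left (by linarith)
  have hβ1lt : β1 < β0 := max_lt (by linarith) (by linarith)
  have hβ0lt : β0 < β2 := by rw [hβ2def]; linarith
  have h12 : β1 ≤ β2 := by linarith
  have hd1 : dist β1 β0 < δ := by
    rw [Real.dist_eq, abs_of_nonpos (by linarith)]
    have : β0 - δ/2 ≤ β1 := le_max_right _ _
    linarith
  have hd2 : dist β2 β0 < δ := by
    rw [Real.dist_eq, abs_of_nonneg (by linarith)]
    rw [hβ2def]; linarith
  have hc1 := hδ hd1
  have hc2 := hδ hd2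
  rw [Real.dist_eq, abs_lt] at hc1 hc2
  have hgap : β2^(C+1) - 1 < β1^(C+1) := by
    linarith [hc1.1, hc2.2]
  refine ⟨EC C ∩ Set.Ioo β1 β2, ?_, ?_⟩
  · exact inter_mem_nhdsWithin _ (isOpen_Ioo.mem_nhds ⟨hβ1lt, hβ0lt⟩)
  · apply measure_mono_null (Set.inter_subset_inter_right _ Set.Ioo_subset_Icc_self)
    exact EC_inter_null hβ11 h12 hgap

end A0Proof

/-- A₀ has Lebesgue measure zero. -/
theorem A0_measure_zero : volume A0 = 0 := by
  have hsub : A0 ⊆ ⋃ C : ℕ, A0Proof.EC C := by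
    intro β hβ
    obtain ⟨h1, C, hC⟩ := hβ
    exact Set.mem_iUnion.mpr ⟨C, h1, hC⟩
  exact measure_mono_null hsub (measure_iUnion_null fun C => A0Proof.EC_null C)
end

section
/- For any real numbers 0 ≤ a ≤ b ≤ ∞, there exists a strictly increasing sequence of positive integers (l_n) such that liminf_{n→∞} (log l_n)/n = a, limsup_{n→∞} (log l_n)/n = b, and l_n ≥ ⌊e^{√n}⌋ for all sufficiently large n. -/
open Filter MeasureTheory Set

open Filter Real Topology

/-- Block times: tₖ = 2^(3^k). -/
private def btT (k : ℕ) : ℕ := 2 ^ 3 ^ k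

/-- Index of the last block time ≤ n. -/
private def btK (n : ℕ) : ℕ := Nat.findGreatest (fun k => 2 ^ 3 ^ k ≤ n) n

private lemma btT_strictMono : StrictMono btT := fun _ _ h =>
  pow_lt_pow_right₀ one_lt_two (pow_lt_pow_right₀ (by norm_num) h)

private lemma btT_two_le (k : ℕ) : 2 ≤ btT k := by
  calc 2 = 2 ^ 1 := rfl
  _ ≤ 2 ^ 3 ^ k := Nat.pow_le_pow_right (by norm_num) (Nat.one_le_pow _ _ (by norm_num))

private lemma le_btT (k : ℕ) : k ≤ btT k :=
  le_trans (Nat.lt_two_pow_self (n := k)).le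
    (Nat.pow_le_pow_right (by norm_num) (Nat.lt_pow_self (n := k) (a := 3) (by norm_num)).le)

private lemma btT_cube (k : ℕ) : btT (k + 1) = btT k ^ 3 := by
  unfold btT; rw [← pow_mul, pow_succ]

private lemma btK_le {n k : ℕ} (h : n < btT (k + 1)) : btK n ≤ k := by
  by_contra hc
  push_neg at hc
  have h0 : btK n ≠ 0 := by omega
  have hP : 2 ^ 3 ^ btK n ≤ n :=
    (Nat.findGreatest_eq_iff.1 (rfl : Nat.findGreatest (fun k => 2 ^ 3 ^ k ≤ n) n = btK n)).2.1 h0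
  have := btT_strictMono.monotone (show k + 1 ≤ btK n from hc)
  unfold btT at this h
  omega

private lemma btK_ge {n k : ℕ} (h1 : btT k ≤ n) : k ≤ btK n :=
  Nat.le_findGreatest (le_trans (le_btT k) h1) h1

private lemma btK_mono : Monotone btK := fun m n h =>
  Nat.findGreatest_mono (fun _ hk => le_trans hk h) h

private lemma btT_btK_le {n : ℕ} (h : 2 ≤ n) : btT (btK n) ≤ n :=
  Nat.findGreatest_spec (P := fun k => 2 ^ 3 ^ k ≤ n) (m := 0) (Nat.zero_le n)
    (by simpa using h)

private lemma tendsto_sqrt_nat : Tendsto (fun n : ℕ => Real.sqrt n) atTop atTop := by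
  rw [tendsto_atTop_atTop]
  intro C
  refine ⟨(⌈C⌉₊) ^ 2, fun n hn => ?_⟩
  have h1 : ((⌈C⌉₊ ^ 2 : ℕ) : ℝ) ≤ (n : ℝ) := Nat.cast_le.2 hn
  push_cast at h1
  calc C ≤ (⌈C⌉₊ : ℝ) := Nat.le_ceil C
  _ = Real.sqrt ((⌈C⌉₊ : ℝ) ^ 2) := (Real.sqrt_sq (by positivity)).symm
  _ ≤ Real.sqrt n := Real.sqrt_le_sqrt h1

private lemma tendsto_exp_neg_sqrt_nat :
    Tendsto (fun n : ℕ => Real.exp (-Real.sqrt n)) atTop (𝓝 0) :=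
  Real.tendsto_exp_atBot.comp (tendsto_neg_atTop_atBot.comp tendsto_sqrt_nat)

private lemma tendsto_sqrt_div_nat : Tendsto (fun n : ℕ => Real.sqrt n / n) atTop (𝓝 0) := by
  have h : ∀ᶠ n : ℕ in atTop, 1 / Real.sqrt n = Real.sqrt n / n := by
    filter_upwards [eventually_ge_atTop 1] with n hn
    have hpos : (0 : ℝ) < Real.sqrt n := Real.sqrt_pos.2 (by exact_mod_cast hn)
    nth_rewrite 2 [← Real.mul_self_sqrt (x := (n : ℝ)) (by positivity)]
    field_simp
    rw [Real.sqrt_sq hpos.le, Real.mul_self_sqrt (by positivity)]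
  refine Tendsto.congr' h ?_
  simpa [one_div, Pi.inv_def] using (tendsto_sqrt_nat.inv_tendsto_atTop)

private lemma er_tendsto {v : ℕ → ℝ} {c : ℝ} (h : Tendsto v atTop (𝓝 c)) :
    Tendsto (fun n => ((v n : ℝ) : EReal)) atTop (𝓝 (c : EReal)) :=
  (continuous_coe_real_ereal.tendsto c).comp h

private lemma BT_liminf_le (u : ℕ → EReal) (m : ℕ → ℕ) (hm : Tendsto m atTop atTop)
    (w : ℕ → ℝ) (c : ℝ) (hw : Tendsto w atTop (𝓝 c))
    (hle : ∀ᶠ k in atTop, u (m k) ≤ ((w k : ℝ) : EReal)) :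
    Filter.liminf u atTop ≤ (c : EReal) := by
  have h2 : Filter.liminf u atTop ≤ Filter.liminf u (Filter.map m atTop) :=
    Filter.liminf_le_liminf_of_le hm
  have h2' : Filter.liminf u (Filter.map m atTop) = Filter.liminf (fun k => u (m k)) atTop := by
    rw [Filter.liminf, Filter.liminf, Filter.map_map]; rfl
  have h3 : Filter.liminf (fun k => u (m k)) atTop
      ≤ Filter.liminf (fun k => ((w k : ℝ) : EReal)) atTop := Filter.liminf_le_liminf hle
  have h4 : Filter.liminf (fun k => ((w k : ℝ) : EReal)) atTop = (c : EReal) :=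
    (er_tendsto hw).liminf_eq
  exact (h2.trans_eq h2').trans (h3.trans_eq h4)

private lemma BT_le_limsup (u : ℕ → EReal) (m : ℕ → ℕ) (hm : Tendsto m atTop atTop)
    (w : ℕ → EReal) (c : EReal) (hw : Tendsto w atTop (𝓝 c))
    (hle : ∀ᶠ k in atTop, w k ≤ u (m k)) :
    c ≤ Filter.limsup u atTop := by
  have h2' : Filter.limsup u (Filter.map m atTop) = Filter.limsup (fun k => u (m k)) atTop := by
    rw [Filter.limsup, Filter.limsup, Filter.map_map]; rfl
  calc c = Filter.liminf w atTop := hw.liminf_eq.symm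
  _ ≤ Filter.liminf (fun k => u (m k)) atTop := Filter.liminf_le_liminf hle
  _ ≤ Filter.limsup (fun k => u (m k)) atTop := Filter.liminf_le_limsup
  _ = Filter.limsup u (Filter.map m atTop) := h2'.symm
  _ ≤ Filter.limsup u atTop := Filter.limsup_le_limsup_of_le hm

private lemma BT_limsup_le (u : ℕ → EReal) (w : ℕ → ℝ) (c : ℝ) (hw : Tendsto w atTop (𝓝 c))
    (hle : ∀ᶠ n in atTop, u n ≤ ((w n : ℝ) : EReal)) : Filter.limsup u atTop ≤ (c : EReal) :=
  (Filter.limsup_le_limsup hle).trans_eq (er_tendsto hw).limsup_eq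

private lemma BT_le_liminf (u : ℕ → EReal) (w : ℕ → EReal) (c : EReal)
    (hw : Tendsto w atTop (𝓝 c)) (hle : ∀ᶠ n in atTop, w n ≤ u n) :
    c ≤ Filter.liminf u atTop :=
  hw.liminf_eq ▸ Filter.liminf_le_liminf hle

/-- Master construction: from a monotone exponent function dominating √n, build `l`. -/
private lemma BT_main (x : ℕ → ℝ) (hmono : Monotone x) (hsq : ∀ n : ℕ, Real.sqrt (n : ℝ) ≤ x n) :
    ∃ l : ℕ → ℕ, StrictMono l ∧ (∀ n, 0 < l n) ∧
      (∀ n : ℕ, Nat.floor (Real.exp (Real.sqrt n)) ≤ l n) ∧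
      ∀ n : ℕ, 1 ≤ n → x n / n ≤ Real.log (l n) / n ∧
        Real.log (l n) / n ≤ x n / n + Real.exp (-Real.sqrt n) := by
  refine ⟨fun n => Nat.floor (Real.exp (x n)) + n, ?_, ?_, ?_, ?_⟩
  · refine strictMono_nat_of_lt_succ fun n => ?_
    have := Nat.floor_mono (Real.exp_le_exp.2 (hmono (show n ≤ n + 1 by omega)))
    show Nat.floor (Real.exp (x n)) + n < Nat.floor (Real.exp (x (n + 1))) + (n + 1)
    omega
  · intro n
    have h1 : 1 ≤ Nat.floor (Real.exp (x n)) := by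
      apply Nat.le_floor
      have : (0 : ℝ) ≤ x n := le_trans (Real.sqrt_nonneg _) (hsq n)
      simpa using Real.one_le_exp this
    show 0 < Nat.floor (Real.exp (x n)) + n
    omega
  · intro n
    exact le_trans (Nat.floor_mono (Real.exp_le_exp.2 (hsq n))) (Nat.le_add_right _ n)
  · intro n hn
    have hn1 : (1 : ℝ) ≤ (n : ℝ) := by exact_mod_cast hn
    have hnpos : (0 : ℝ) < (n : ℝ) := by linarith
    have hfl : Real.exp (x n) - 1 < (Nat.floor (Real.exp (x n)) : ℝ) :=
      Nat.sub_one_lt_floor _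
    have hcast : ((Nat.floor (Real.exp (x n)) + n : ℕ) : ℝ)
        = (Nat.floor (Real.exp (x n)) : ℝ) + (n : ℝ) := by push_cast; ring
    have hl_lb : Real.exp (x n) ≤ ((Nat.floor (Real.exp (x n)) + n : ℕ) : ℝ) := by
      rw [hcast]; linarith
    have hlpos : (0 : ℝ) < ((Nat.floor (Real.exp (x n)) + n : ℕ) : ℝ) :=
      lt_of_lt_of_le (Real.exp_pos _) hl_lb
    have hlog_lb : x n ≤ Real.log ((Nat.floor (Real.exp (x n)) + n : ℕ) : ℝ) :=
      (Real.le_log_iff_exp_le hlpos).2 hl_lb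
    have hl_ub : ((Nat.floor (Real.exp (x n)) + n : ℕ) : ℝ) ≤ Real.exp (x n) + n := by
      rw [hcast]
      have := Nat.floor_le (Real.exp_nonneg (x n))
      linarith
    have key : Real.log (Real.exp (x n) + n) ≤ x n + n * Real.exp (-(x n)) := by
      rw [Real.log_le_iff_le_exp (by positivity), Real.exp_add]
      have h1 : (n : ℝ) * Real.exp (-(x n)) + 1 ≤ Real.exp ((n : ℝ) * Real.exp (-(x n))) :=
        Real.add_one_le_exp _
      have h2 : Real.exp (x n) * Real.exp (-(x n)) = 1 := by
        rw [← Real.exp_add]; simp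
      nlinarith [Real.exp_pos (x n), Real.exp_pos (-(x n))]
    have key2 : (n : ℝ) * Real.exp (-(x n)) ≤ n * Real.exp (-Real.sqrt n) :=
      mul_le_mul_of_nonneg_left (Real.exp_le_exp.2 (neg_le_neg (hsq n))) (Nat.cast_nonneg n)
    have hlog_ub : Real.log ((Nat.floor (Real.exp (x n)) + n : ℕ) : ℝ)
        ≤ x n + n * Real.exp (-Real.sqrt n) := by
      calc Real.log ((Nat.floor (Real.exp (x n)) + n : ℕ) : ℝ)
          ≤ Real.log (Real.exp (x n) + n) := Real.log_le_log hlpos hl_ub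
      _ ≤ x n + n * Real.exp (-(x n)) := key
      _ ≤ x n + n * Real.exp (-Real.sqrt n) := by linarith
    constructor
    · gcongr
    · calc Real.log ((Nat.floor (Real.exp (x n)) + n : ℕ) : ℝ) / n
          ≤ (x n + n * Real.exp (-Real.sqrt n)) / n := by gcongr
      _ = x n / n + Real.exp (-Real.sqrt n) := by
          rw [add_div, mul_div_cancel_left₀ _ (ne_of_gt hnpos)]

private lemma BT_case_real (aR : ℝ) (haR : 0 ≤ aR) (p : ℕ → ℝ)
    (hp0 : ∀ k, 0 ≤ p k) (hpm : Monotone p)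
    (hdecay : Tendsto (fun k => p k / ((btT (k + 1) - 1 : ℕ) : ℝ)) atTop (𝓝 0)) :
    ∃ l : ℕ → ℕ, StrictMono l ∧ (∀ n, 0 < l n) ∧
      Filter.liminf (fun n => ((Real.log (l n) / n : ℝ) : EReal)) atTop = (aR : EReal) ∧
      (∀ n : ℕ, Nat.floor (Real.exp (Real.sqrt n)) ≤ l n) ∧
      (∀ k : ℕ, ((p k / btT k : ℝ) : EReal)
          ≤ ((Real.log (l (btT k)) / (btT k) : ℝ) : EReal)) ∧
      (∀ n : ℕ, 1 ≤ n → ((Real.log (l n) / n : ℝ) : EReal)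
          ≤ ((max (aR + Real.sqrt n / n) (p (btK n) / n) + Real.exp (-Real.sqrt n) : ℝ)
              : EReal)) := by
  set x : ℕ → ℝ := fun n => max (aR * n + Real.sqrt n) (p (btK n)) with hx
  have hxm : Monotone x := by
    intro m n h
    have hc : (m : ℝ) ≤ n := by exact_mod_cast h
    exact max_le_max
      (add_le_add (mul_le_mul_of_nonneg_left hc haR) (Real.sqrt_le_sqrt hc))
      (hpm (btK_mono h))
  have hsq : ∀ n : ℕ, Real.sqrt (n : ℝ) ≤ x n := fun n =>
    (le_add_of_nonneg_left (by positivity)).trans (le_max_left _ _)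
  obtain ⟨l, hl1, hl2, hl3, hl4⟩ := BT_main x hxm hsq
  set u : ℕ → EReal := fun n => ((Real.log (l n) / n : ℝ) : EReal) with hu
  -- the generic upper bound
  have hup : ∀ n : ℕ, 1 ≤ n → u n
      ≤ ((max (aR + Real.sqrt n / n) (p (btK n) / n) + Real.exp (-Real.sqrt n) : ℝ) : EReal) := by
    intro n hn
    have hnpos : (0 : ℝ) < n := by exact_mod_cast hn
    have h1 := (hl4 n hn).2
    have h2 : x n / n = max ((aR * n + Real.sqrt n) / n) (p (btK n) / n) :=
      (max_div_div_right hnpos.le _ _).symm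
    have h3 : (aR * n + Real.sqrt n) / n = aR + Real.sqrt n / n := by
      rw [add_div, mul_div_cancel_right₀ _ (ne_of_gt hnpos)]
    apply EReal.coe_le_coe_iff.2
    calc Real.log (l n) / n ≤ x n / n + Real.exp (-Real.sqrt n) := h1
    _ = max (aR + Real.sqrt n / n) (p (btK n) / n) + Real.exp (-Real.sqrt n) := by
        rw [h2, h3]
  -- lower bound at block times
  have hlowT : ∀ k : ℕ, ((p k / btT k : ℝ) : EReal) ≤ u (btT k) := by
    intro k
    have h2 : (1 : ℕ) ≤ btT k := le_trans (by norm_num) (btT_two_le k)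
    have hpos : (0 : ℝ) < (btT k : ℝ) := by exact_mod_cast lt_of_lt_of_le one_pos h2
    have h1 := (hl4 (btT k) h2).1
    have h3 : p k ≤ x (btT k) := by
      calc p k ≤ p (btK (btT k)) := hpm (btK_ge (le_refl _))
      _ ≤ x (btT k) := le_max_right _ _
    exact EReal.coe_le_coe_iff.2 (le_trans (by gcongr : p k / (btT k : ℝ) ≤ x (btT k) / btT k) h1)
  -- liminf lower bound
  have hlim_ge : (aR : EReal) ≤ Filter.liminf u atTop := by
    refine BT_le_liminf u (fun _ => (aR : EReal)) _ tendsto_const_nhds ?_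
    filter_upwards [eventually_ge_atTop 1] with n hn
    have hnpos : (0 : ℝ) < n := by exact_mod_cast hn
    have h1 := (hl4 n hn).1
    have h2 : aR ≤ x n / n := by
      rw [le_div_iff₀ hnpos]
      calc aR * n ≤ aR * n + Real.sqrt n := le_add_of_nonneg_right (Real.sqrt_nonneg _)
      _ ≤ x n := le_max_left _ _
    exact EReal.coe_le_coe_iff.2 (h2.trans h1)
  -- liminf upper bound via subsequence m k = btT (k+1) - 1
  have hlim_le : Filter.liminf u atTop ≤ (aR : EReal) := by
    set m : ℕ → ℕ := fun k => btT (k + 1) - 1 with hm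
    have hmt : Tendsto m atTop atTop := by
      apply tendsto_atTop_mono (fun k => ?_) tendsto_id
      have := le_btT (k + 1)
      have := btT_two_le (k + 1)
      simp only [hm, id_eq]
      omega
    have hmk1 : ∀ k, 1 ≤ m k := fun k => by
      have := btT_two_le (k + 1); simp only [hm]; omega
    refine BT_liminf_le u m hmt
      (fun k => max (aR + Real.sqrt (m k) / (m k)) (p k / (m k)) + Real.exp (-Real.sqrt (m k)))
      aR ?_ ?_
    · have t1 : Tendsto (fun k => Real.sqrt (m k) / (m k)) atTop (𝓝 0) :=
        tendsto_sqrt_div_nat.comp hmt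
      have t2 : Tendsto (fun k => Real.exp (-Real.sqrt (m k))) atTop (𝓝 0) :=
        tendsto_exp_neg_sqrt_nat.comp hmt
      have := ((tendsto_const_nhds (x := aR)).add t1).max hdecay |>.add t2
      simpa [max_eq_left haR] using this
    · refine Eventually.of_forall fun k => ?_
      have h1 := hup (m k) (hmk1 k)
      have hmpos : (0 : ℝ) < (m k : ℝ) := by exact_mod_cast hmk1 k
      have h2 : p (btK (m k)) ≤ p k := by
        apply hpm
        apply btK_le
        have := btT_two_le (k + 1)
        simp only [hm]
        omega
      refine h1.trans (EReal.coe_le_coe_iff.2 ?_)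
      have : p (btK (m k)) / (m k : ℝ) ≤ p k / m k := by gcongr
      have hmax : max (aR + Real.sqrt (m k) / m k) (p (btK (m k)) / m k)
          ≤ max (aR + Real.sqrt (m k) / m k) (p k / m k) := max_le_max (le_refl _) this
      linarith
  exact ⟨l, hl1, hl2, le_antisymm hlim_le hlim_ge, hl3, hlowT, hup⟩

private lemma BT_two_div_tendsto : Tendsto (fun k => 2 / ((btT k : ℕ) : ℝ)) atTop (𝓝 0) :=
  Tendsto.div_atTop tendsto_const_nhds
    (tendsto_natCast_atTop_atTop.comp btT_strictMono.tendsto_atTop)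

private lemma BT_cast_m (k : ℕ) :
    ((btT (k + 1) - 1 : ℕ) : ℝ) = ((btT k : ℕ) : ℝ) ^ 3 - 1 := by
  rw [Nat.cast_sub (le_trans (by norm_num) (btT_two_le (k + 1)))]
  rw [btT_cube]
  push_cast
  ring

private lemma BT_mpos (k : ℕ) : (0 : ℝ) < ((btT (k + 1) - 1 : ℕ) : ℝ) := by
  rw [BT_cast_m]
  have ht : (2 : ℝ) ≤ ((btT k : ℕ) : ℝ) := by exact_mod_cast btT_two_le k
  have h8 : (2 : ℝ) ^ 3 ≤ ((btT k : ℕ) : ℝ) ^ 3 := pow_le_pow_left₀ (by norm_num) ht 3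
  nlinarith

private lemma BT_frac1 (k : ℕ) :
    ((btT k : ℕ) : ℝ) / ((btT (k + 1) - 1 : ℕ) : ℝ) ≤ 2 / ((btT k : ℕ) : ℝ) := by
  have ht : (2 : ℝ) ≤ ((btT k : ℕ) : ℝ) := by exact_mod_cast btT_two_le k
  rw [div_le_div_iff₀ (BT_mpos k) (by linarith), BT_cast_m]
  nlinarith

private lemma BT_frac2 (k : ℕ) :
    ((btT k : ℕ) : ℝ) ^ 2 / ((btT (k + 1) - 1 : ℕ) : ℝ) ≤ 2 / ((btT k : ℕ) : ℝ) := by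
  have ht : (2 : ℝ) ≤ ((btT k : ℕ) : ℝ) := by exact_mod_cast btT_two_le k
  rw [div_le_div_iff₀ (BT_mpos k) (by linarith), BT_cast_m]
  nlinarith

theorem exists_seq_prescribed_rates' (a b : EReal) (h0 : 0 ≤ a) (hab : a ≤ b) :
    ∃ l : ℕ → ℕ, StrictMono l ∧ (∀ n, 0 < l n) ∧
      Filter.liminf (fun n => ((Real.log (l n) / n : ℝ) : EReal)) Filter.atTop = a ∧
      Filter.limsup (fun n => ((Real.log (l n) / n : ℝ) : EReal)) Filter.atTop = b ∧
      ∀ᶠ n : ℕ in Filter.atTop, Nat.floor (Real.exp (Real.sqrt (n : ℝ))) ≤ l n := by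
  induction a using EReal.rec with
  | bot => exact absurd h0 (by simp)
  | top =>
    have hb : b = ⊤ := top_le_iff.1 hab
    subst hb
    have hmono : Monotone (fun n : ℕ => (n : ℝ) * Real.sqrt n) := by
      intro m n h
      have hc : (m : ℝ) ≤ n := by exact_mod_cast h
      exact mul_le_mul hc (Real.sqrt_le_sqrt hc) (Real.sqrt_nonneg _) (Nat.cast_nonneg _)
    have hsq : ∀ n : ℕ, Real.sqrt (n : ℝ) ≤ (n : ℝ) * Real.sqrt n := by
      intro n
      rcases Nat.eq_zero_or_pos n with h | h
      · simp [h]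
      · exact le_mul_of_one_le_left (Real.sqrt_nonneg _) (by exact_mod_cast h)
    obtain ⟨l, hl1, hl2, hl3, hl4⟩ := BT_main _ hmono hsq
    set u : ℕ → EReal := fun n => ((Real.log (l n) / n : ℝ) : EReal) with hu
    have hliminf : Filter.liminf u atTop = ⊤ := by
      refine top_le_iff.1 (BT_le_liminf u (fun n => ((Real.sqrt n : ℝ) : EReal)) ⊤ ?_ ?_)
      · rw [EReal.tendsto_nhds_top_iff_real]
        intro z
        filter_upwards [tendsto_sqrt_nat.eventually_gt_atTop z] with n hn
        exact EReal.coe_lt_coe_iff.2 hn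
      · filter_upwards [eventually_ge_atTop 1] with n hn
        have hnpos : (0 : ℝ) < n := by exact_mod_cast hn
        have h1 := (hl4 n hn).1
        have h2 : ((n : ℝ) * Real.sqrt n) / n = Real.sqrt n :=
          mul_div_cancel_left₀ _ (ne_of_gt hnpos)
        exact EReal.coe_le_coe_iff.2 (by rw [← h2]; exact h1)
    refine ⟨l, hl1, hl2, hliminf, ?_, Eventually.of_forall hl3⟩
    exact top_le_iff.1 (hliminf ▸ Filter.liminf_le_limsup)
  | coe aR =>
    have haR : 0 ≤ aR := EReal.coe_nonneg.1 h0
    induction b using EReal.rec with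
    | bot => simp at hab
    | coe bR =>
      have habR : aR ≤ bR := EReal.coe_le_coe_iff.1 hab
      have hbR : 0 ≤ bR := le_trans haR habR
      set p : ℕ → ℝ := fun k => bR * btT k with hp
      have hp0 : ∀ k, 0 ≤ p k := fun k => mul_nonneg hbR (Nat.cast_nonneg _)
      have hpm : Monotone p := fun i j h =>
        mul_le_mul_of_nonneg_left (by exact_mod_cast btT_strictMono.monotone h) hbR
      have hdecay : Tendsto (fun k => p k / ((btT (k + 1) - 1 : ℕ) : ℝ)) atTop (𝓝 0) := by
        have hb2 : ∀ k, p k / ((btT (k + 1) - 1 : ℕ) : ℝ) ≤ bR * (2 / btT k) := by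
          intro k
          rw [hp, mul_div_assoc]
          exact mul_le_mul_of_nonneg_left (BT_frac1 k) hbR
        have hq : ∀ k, 0 ≤ p k / ((btT (k + 1) - 1 : ℕ) : ℝ) := fun k =>
          div_nonneg (hp0 k) (BT_mpos k).le
        have hlimb : Tendsto (fun k => bR * (2 / ((btT k : ℕ) : ℝ))) atTop (𝓝 0) := by
          simpa using BT_two_div_tendsto.const_mul bR
        exact tendsto_of_tendsto_of_tendsto_of_le_of_le tendsto_const_nhds hlimb hq hb2
      obtain ⟨l, hl1, hl2, hliminf, hl3, hlowT, hup⟩ := BT_case_real aR haR p hp0 hpm hdecay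
      set u : ℕ → EReal := fun n => ((Real.log (l n) / n : ℝ) : EReal) with hu
      refine ⟨l, hl1, hl2, hliminf, le_antisymm ?_ ?_, Eventually.of_forall hl3⟩
      · -- limsup ≤ bR
        refine BT_limsup_le u
          (fun n => max (aR + Real.sqrt n / n) bR + Real.exp (-Real.sqrt n)) bR ?_ ?_
        · have := ((tendsto_const_nhds (x := aR)).add tendsto_sqrt_div_nat).max
            (tendsto_const_nhds (x := bR)) |>.add tendsto_exp_neg_sqrt_nat
          simpa [max_eq_right habR] using this
        · filter_upwards [eventually_ge_atTop 2] with n hn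
          have hn1 : (1 : ℕ) ≤ n := by omega
          have hnpos : (0 : ℝ) < n := by exact_mod_cast hn1
          refine (hup n hn1).trans (EReal.coe_le_coe_iff.2 ?_)
          have h2 : p (btK n) / n ≤ bR := by
            rw [div_le_iff₀ hnpos]
            have hcast : ((btT (btK n) : ℕ) : ℝ) ≤ (n : ℝ) := by exact_mod_cast btT_btK_le hn
            show bR * ((btT (btK n) : ℕ) : ℝ) ≤ bR * (n : ℝ)
            exact mul_le_mul_of_nonneg_left hcast hbR
          have := max_le_max (le_refl (aR + Real.sqrt n / n))
            (h2.trans (le_max_right (aR + Real.sqrt n / n) bR))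
          have hmax : max (aR + Real.sqrt n / n) (p (btK n) / n)
              ≤ max (aR + Real.sqrt n / n) bR :=
            max_le (le_max_left _ _) (h2.trans (le_max_right _ _))
          linarith
      · -- bR ≤ limsup
        refine BT_le_limsup u btT btT_strictMono.tendsto_atTop
          (fun _ => (bR : EReal)) _ tendsto_const_nhds ?_
        refine Eventually.of_forall fun k => ?_
        have hpos : (0 : ℝ) < (btT k : ℝ) := by
          exact_mod_cast lt_of_lt_of_le (by norm_num) (btT_two_le k)
        have : p k / btT k = bR := by
          rw [hp, mul_div_cancel_right₀ _ (ne_of_gt hpos)]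
        exact this ▸ hlowT k
    | top =>
      set p : ℕ → ℝ := fun k => ((btT k : ℕ) : ℝ) ^ 2 with hp
      have hp0 : ∀ k, 0 ≤ p k := fun k => by positivity
      have hpm : Monotone p := fun i j h => by
        have : ((btT i : ℕ) : ℝ) ≤ ((btT j : ℕ) : ℝ) := by
          exact_mod_cast btT_strictMono.monotone h
        have h0' : (0 : ℝ) ≤ ((btT i : ℕ) : ℝ) := Nat.cast_nonneg _
        simp only [hp]
        nlinarith
      have hdecay : Tendsto (fun k => p k / ((btT (k + 1) - 1 : ℕ) : ℝ)) atTop (𝓝 0) := by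
        have hq : ∀ k, 0 ≤ p k / ((btT (k + 1) - 1 : ℕ) : ℝ) := fun k =>
          div_nonneg (hp0 k) (BT_mpos k).le
        exact tendsto_of_tendsto_of_tendsto_of_le_of_le tendsto_const_nhds
          BT_two_div_tendsto hq (fun k => BT_frac2 k)
      obtain ⟨l, hl1, hl2, hliminf, hl3, hlowT, hup⟩ := BT_case_real aR haR p hp0 hpm hdecay
      set u : ℕ → EReal := fun n => ((Real.log (l n) / n : ℝ) : EReal) with hu
      refine ⟨l, hl1, hl2, hliminf, top_le_iff.1 ?_, Eventually.of_forall hl3⟩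
      refine BT_le_limsup u btT btT_strictMono.tendsto_atTop
        (fun k => (((btT k : ℕ) : ℝ) : EReal)) ⊤ ?_ ?_
      · rw [EReal.tendsto_nhds_top_iff_real]
        intro z
        have := (tendsto_natCast_atTop_atTop (R := ℝ)).comp
          btT_strictMono.tendsto_atTop
        filter_upwards [this.eventually_gt_atTop z] with k hk
        exact EReal.coe_lt_coe_iff.2 hk
      · refine Eventually.of_forall fun k => ?_
        have hpos : (0 : ℝ) < (btT k : ℝ) := by
          exact_mod_cast lt_of_lt_of_le (by norm_num) (btT_two_le k)
        have h2 : p k / ((btT k : ℕ) : ℝ) = ((btT k : ℕ) : ℝ) := by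
          show ((btT k : ℕ) : ℝ) ^ 2 / ((btT k : ℕ) : ℝ) = ((btT k : ℕ) : ℝ)
          rw [pow_two, mul_div_cancel_right₀ _ (ne_of_gt hpos)]
        have h3 := hlowT k
        rw [h2] at h3
        exact h3

/-- For any 0 ≤ a ≤ b ≤ ∞ there is a strictly increasing sequence of positive integers
with liminf (log lₙ)/n = a, limsup (log lₙ)/n = b, growing at least like ⌊e^{√n}⌋
eventually. -/
theorem exists_seq_prescribed_rates (a b : EReal) (h0 : 0 ≤ a) (hab : a ≤ b) :
    ∃ l : ℕ → ℕ, StrictMono l ∧ (∀ n, 0 < l n) ∧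
      Filter.liminf (fun n => ((Real.log (l n) / n : ℝ) : EReal)) Filter.atTop = a ∧
      Filter.limsup (fun n => ((Real.log (l n) / n : ℝ) : EReal)) Filter.atTop = b ∧
      ∀ᶠ n : ℕ in Filter.atTop, Nat.floor (Real.exp (Real.sqrt (n : ℝ))) ≤ l n := by
  exact exists_seq_prescribed_rates' a b h0 hab
end
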